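/- Let α < 1 be real, let V(n,k) be an arbitrary array of real weights, and let 1 ≤ l ≤ n. Then the expected number of blocks of size l under the Gibbs sampling formula satisfies: ∑ c_l·G(c) = binom(n,l)·(1−α)_{l−1}·∑_{k=1}^{n−l+1} V(n,k)·S(n−l, k−1; α), where the sum ranges over all tuples (c_1,…,c_n) of nonnegative integers with ∑_{i=1}^{n} i·c_i = n. -/

import Mathlib

/-- Rising factorial `(x)_n = x(x+1)⋯(x+n−1)`. -/
noncomputable def risingFac (x : ℝ) (n : ℕ) : ℝ := ∏ i ∈ Finset.range n, (x + i)

/-- Rising factorial with increment `α`: `(x)_{n↑α} = ∏_{i<n} (x + iα)`. -/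
noncomputable def risingFacInc (x α : ℝ) (n : ℕ) : ℝ := ∏ i ∈ Finset.range n, (x + i * α)

/-- Falling factorial `(x)_{[n]} = x(x−1)⋯(x−n+1)`. -/
noncomputable def fallingFac (x : ℝ) (n : ℕ) : ℝ := ∏ i ∈ Finset.range n, (x - i)

/-- Compositions of `n` into `k` positive parts, as functions `Fin k → ℕ`. -/
def compositions (n k : ℕ) : Finset (Fin k → ℕ) :=
  (Fintype.piFinset fun _ => Finset.range (n + 1)).filter
    (fun f => (∀ i, 0 < f i) ∧ ∑ i, f i = n)

/-- Tuples of `k` nonnegative integers summing to `n`. -/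
def weakCompositions (n k : ℕ) : Finset (Fin k → ℕ) :=
  (Fintype.piFinset fun _ => Finset.range (n + 1)).filter (fun f => ∑ i, f i = n)

/-- Generalized (central) Stirling number
`S(n,k;α) = (n!/k!) ∑_{(n_1,…,n_k)} ∏_j (1−α)_{n_j−1}/n_j!`,
the sum over compositions of `n` into `k` positive parts. -/
noncomputable def genStirling (α : ℝ) (n k : ℕ) : ℝ :=
  (Nat.factorial n : ℝ) / (Nat.factorial k : ℝ) *
    ∑ f ∈ compositions n k, ∏ j, risingFac (1 - α) (f j - 1) / (Nat.factorial (f j) : ℝ)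

/-- Non-central generalized Stirling number
`S(n,k;α,γ) = ∑_{s=k}^n C(n,s) S(s,k;α) (−γ)_{n−s}`. -/
noncomputable def genStirlingNC (α γ : ℝ) (n k : ℕ) : ℝ :=
  ∑ s ∈ Finset.Icc k n, (n.choose s : ℝ) * genStirling α s k * risingFac (-γ) (n - s)

/-- Count vectors `(c_1,…,c_n)` with `∑ i·c_i = n`, encoded as `c : Fin n → ℕ`
where index `i` represents size `i+1`. -/
def countVectors (n : ℕ) : Finset (Fin n → ℕ) :=
  (Fintype.piFinset fun _ => Finset.range (n + 1)).filter
    (fun c => ∑ i, (i.1 + 1) * c i = n)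

/-- The Gibbs sampling formula
`G(c) = n!·V(n,k)·∏_i [(1−α)_{i−1}]^{c_i}/((i!)^{c_i} c_i!)`, `k = ∑ c_i`. -/
noncomputable def gibbsSampling (α : ℝ) (V : ℕ → ℕ → ℝ) (n : ℕ) (c : Fin n → ℕ) : ℝ :=
  (Nat.factorial n : ℝ) * V n (∑ i, c i) *
    ∏ i, (risingFac (1 - α) i.1) ^ (c i) /
      ((Nat.factorial (i.1 + 1) : ℝ) ^ (c i) * (Nat.factorial (c i) : ℝ))

/-!
Put `w s = (1 - α)_{s-1} / s!`, so that `G(c) = n! V(n,k) ∏ᵢ w(i)^{cᵢ} / cᵢ!`. Removing one block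
of size `l` maps the count vectors of `n` with `c_l > 0` bijectively onto those of `n - l`, and
turns `c_l ∏ᵢ w(i)^{cᵢ} / cᵢ!` into `w(l) ∏ᵢ w(i)^{c'ᵢ} / c'ᵢ!`. It remains to see that the sum
of `∏ᵢ w(i)^{cᵢ} / cᵢ!` over the count vectors of `m` with `k` blocks is `1 / k!` times the sum
of `∏ⱼ w(nⱼ)` over the compositions of `m` into `k` parts, which is `S(m, k; α) / m!`. This goes
by induction on `k`: split off the first part of a composition; on the count-vector side,
removing a block of size `s` and summing over `s` reaches every count vector with `k` blocks
with total multiplicity `∑ᵢ cᵢ = k`.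
-/

open Finset Nat

noncomputable def countWeight (w : ℕ → ℝ) {N : ℕ} (c : Fin N → ℕ) : ℝ :=
  ∏ i, w (i.1 + 1) ^ c i / (c i)!

/-- Decoupling the length `N` from the total `m` lets a block be removed without changing the
index type. -/
def countVectorsOn (N m : ℕ) : Finset (Fin N → ℕ) :=
  (Fintype.piFinset fun _ => range (m + 1)).filter fun c => ∑ i, (i.1 + 1) * c i = m

theorem countVectors_eq_countVectorsOn (n : ℕ) : countVectors n = countVectorsOn n n := rfl

section CountVectors

variable {N m : ℕ} {c : Fin N → ℕ}

theorem mul_le_of_sum_mul_eq (hc : ∑ i, (i.1 + 1) * c i = m) (i : Fin N) :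
    (i.1 + 1) * c i ≤ m :=
  hc ▸ single_le_sum (f := fun j : Fin N => (j.1 + 1) * c j) (fun _ _ => Nat.zero_le _)
    (mem_univ i)

theorem mem_countVectorsOn : c ∈ countVectorsOn N m ↔ ∑ i, (i.1 + 1) * c i = m := by
  refine ⟨fun h => (mem_filter.1 h).2, fun h => mem_filter.2 ⟨?_, h⟩⟩
  exact Fintype.mem_piFinset.2 fun i => mem_range.2 <| Nat.lt_succ_of_le <|
    (Nat.le_mul_of_pos_left _ i.1.succ_pos).trans (mul_le_of_sum_mul_eq h i)

theorem sum_le_of_mem_countVectorsOn (hc : c ∈ countVectorsOn N m) : ∑ i, c i ≤ m :=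
  mem_countVectorsOn.1 hc ▸ sum_le_sum fun i _ => Nat.le_mul_of_pos_left _ i.1.succ_pos

theorem eq_zero_of_mem_countVectorsOn (hc : c ∈ countVectorsOn N m) {i : Fin N}
    (hi : m < i.1 + 1) : c i = 0 := by
  by_contra h
  have := Nat.le_mul_of_pos_right (i.1 + 1) (Nat.pos_of_ne_zero h)
  have := mul_le_of_sum_mul_eq (mem_countVectorsOn.1 hc) i
  omega

theorem sum_mul_add_single (a c : Fin N → ℕ) (p : Fin N) :
    ∑ i, a i * (c + Pi.single p 1 : Fin N → ℕ) i = ∑ i, a i * c i + a p := by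
  simp [mul_add, sum_add_distrib, Pi.single_apply]

theorem countWeight_add_single (w : ℕ → ℝ) (c : Fin N → ℕ) (p : Fin N) :
    (c p + 1 : ℝ) * countWeight w (c + Pi.single p 1) = w (p.1 + 1) * countWeight w c := by
  have hoff : ∀ i ∈ ({p}ᶜ : Finset (Fin N)), (c + Pi.single p 1 : Fin N → ℕ) i = c i :=
    fun i hi => by simp [show i ≠ p by simpa using hi]
  rw [countWeight, countWeight, Fintype.prod_eq_mul_prod_compl p,
    Fintype.prod_eq_mul_prod_compl p, prod_congr rfl fun i hi => by rw [hoff i hi]]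
  simp only [Pi.add_apply, Pi.single_eq_same, pow_succ, Nat.factorial_succ]
  have : ((c p)! : ℝ) ≠ 0 := by positivity
  push_cast
  field_simp

end CountVectors

theorem sum_countVectorsOn_count_mul (w g : ℕ → ℝ) {N m : ℕ} (p : Fin N) (hp : p.1 + 1 ≤ m) :
    ∑ c ∈ countVectorsOn N m, (c p : ℝ) * (g (∑ i, c i) * countWeight w c) =
      w (p.1 + 1) *
        ∑ c ∈ countVectorsOn N (m - (p.1 + 1)), g (∑ i, c i + 1) * countWeight w c := by
  set e : Fin N → ℕ := Pi.single p 1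
  have he : ∀ c : Fin N → ℕ, 0 < c p → c - e + e = c := fun c hc => by
    funext i
    rcases eq_or_ne i p with rfl | h
    · simp only [Pi.add_apply, Pi.sub_apply, Pi.single_eq_same, e]
      omega
    · simp [e, h]
  have hpos : ∀ c ∈ countVectorsOn N m,
      (c p : ℝ) * (g (∑ i, c i) * countWeight w c) ≠ 0 → 0 < c p := fun c _ h =>
    Nat.pos_of_ne_zero fun h0 => h (by simp [h0])
  rw [← sum_filter_of_ne hpos, mul_sum]
  symm
  refine sum_nbij' (· + e) (· - e) ?_ ?_ (fun c _ => add_tsub_cancel_right c e) ?_ ?_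
  · intro c hc
    simp only [mem_filter, mem_countVectorsOn] at hc ⊢
    refine ⟨by rw [sum_mul_add_single, hc]; omega, by simp [e]⟩
  · intro c hc
    simp only [mem_filter, mem_countVectorsOn] at hc ⊢
    have := sum_mul_add_single (fun i => i.1 + 1) (c - e) p
    rw [he c hc.2, hc.1] at this
    omega
  · intro c hc
    exact he c (mem_filter.1 hc).2
  · intro c _
    have hsum := sum_mul_add_single (fun _ => 1) c p
    simp only [one_mul] at hsum
    rw [hsum, mul_left_comm, ← countWeight_add_single w c p]
    simp [e]
    ring

theorem mem_compositions {n k : ℕ} {f : Fin k → ℕ} :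
    f ∈ compositions n k ↔ (∀ i, 0 < f i) ∧ ∑ i, f i = n := by
  refine ⟨fun h => (mem_filter.1 h).2, fun h => mem_filter.2 ⟨?_, h⟩⟩
  exact Fintype.mem_piFinset.2 fun i => mem_range.2 <| Nat.lt_succ_of_le <|
    h.2 ▸ single_le_sum (fun _ _ => Nat.zero_le _) (mem_univ i)

theorem sum_prod_compositions_succ (w : ℕ → ℝ) (n k : ℕ) :
    ∑ f ∈ compositions n (k + 1), ∏ j, w (f j) =
      ∑ s ∈ Icc 1 n, w s * ∑ f ∈ compositions (n - s) k, ∏ j, w (f j) := by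
  simp only [mul_sum, sum_sigma']
  refine sum_nbij' (fun f => ⟨f 0, Fin.tail f⟩) (fun x => Fin.cons x.1 x.2) ?_ ?_
    (fun f _ => Fin.cons_self_tail f) (fun x _ => by simp) ?_
  · intro f hf
    rw [mem_compositions, Fin.forall_fin_succ, Fin.sum_univ_succ] at hf
    simp only [mem_sigma, mem_Icc, mem_compositions]
    exact ⟨⟨hf.1.1, by omega⟩, hf.1.2, by simp [Fin.tail]; omega⟩
  · intro x hx
    simp only [mem_sigma, mem_Icc, mem_compositions] at hx
    rw [mem_compositions, Fin.forall_fin_succ, Fin.sum_univ_succ]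
    simp only [Fin.cons_zero, Fin.cons_succ]
    exact ⟨⟨hx.1.1, hx.2.1⟩, by omega⟩
  · intro f _
    rw [Fin.prod_univ_succ]
    rfl

theorem sum_Icc_one_eq_sum_fin {M : Type*} [AddCommMonoid M] (F : ℕ → M) {m N : ℕ}
    (hm : m ≤ N) : ∑ s ∈ Icc 1 m, F s = ∑ p : Fin N with p.1 + 1 ≤ m, F (p.1 + 1) :=
  (sum_bij (fun p _ => p.1 + 1) (fun p hp => by simp at hp ⊢; omega)
    (fun p _ q _ h => Fin.ext (by omega))
    (fun s hs => ⟨⟨s - 1, by simp at hs; omega⟩, by simp at hs ⊢; omega, by simp at hs ⊢; omega⟩)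
    fun _ _ => rfl).symm

theorem sum_Icc_mul_sum_countVectorsOn (w g : ℕ → ℝ) {N m : ℕ} (hm : m ≤ N) :
    ∑ s ∈ Icc 1 m, w s * ∑ c ∈ countVectorsOn N (m - s), g (∑ i, c i + 1) * countWeight w c =
      ∑ c ∈ countVectorsOn N m, ((∑ i, c i : ℕ) : ℝ) * (g (∑ i, c i) * countWeight w c) := by
  have hvanish : ∀ p : Fin N,
      ∑ c ∈ countVectorsOn N m, (c p : ℝ) * (g (∑ i, c i) * countWeight w c) ≠ 0 →
        p.1 + 1 ≤ m := fun p hp => by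
    by_contra! h
    exact hp <| sum_eq_zero fun c hc => by simp [eq_zero_of_mem_countVectorsOn hc h]
  rw [sum_Icc_one_eq_sum_fin _ hm,
    sum_congr rfl fun p hp => (sum_countVectorsOn_count_mul w g p (mem_filter.1 hp).2).symm,
    sum_filter_of_ne fun p _ => hvanish p, sum_comm]
  simp only [Nat.cast_sum, sum_mul]

theorem sum_prod_compositions_eq (w : ℕ → ℝ) {N : ℕ} (k : ℕ) {m : ℕ} (hm : m ≤ N) :
    ∑ f ∈ compositions m k, ∏ j, w (f j) =
      k ! * ∑ c ∈ countVectorsOn N m with ∑ i, c i = k, countWeight w c := by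
  induction k generalizing m with
  | zero =>
    rcases m with _ | m
    · have : {c ∈ countVectorsOn N 0 | ∑ i, c i = 0} = {0} := by
        ext c
        simp [mem_countVectorsOn, sum_eq_zero_iff, funext_iff]
      rw [this]
      simp [countWeight, compositions]
    · have : {c ∈ countVectorsOn N (m + 1) | ∑ i, c i = 0} = ∅ :=
        filter_eq_empty_iff.2 fun c hc h0 => by
          simpa [sum_eq_zero_iff.1 h0] using mem_countVectorsOn.1 hc
      rw [this]
      simp [compositions]
  | succ k ih =>
    let g : ℕ → ℝ := fun t => if t = k + 1 then 1 else 0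
    have hg : ∀ c : Fin N → ℕ, ((∑ i, c i : ℕ) : ℝ) * (g (∑ i, c i) * countWeight w c) =
        (k + 1) * if ∑ i, c i = k + 1 then countWeight w c else 0 := fun c => by
      split_ifs with h <;> simp [g, h]
    calc ∑ f ∈ compositions m (k + 1), ∏ j, w (f j)
        = k ! * ∑ s ∈ Icc 1 m, w s *
            ∑ c ∈ countVectorsOn N (m - s), g (∑ i, c i + 1) * countWeight w c := by
          rw [sum_prod_compositions_succ, mul_sum]
          refine sum_congr rfl fun s _ => ?_
          rw [ih (by omega), sum_filter]
          simp [g, mul_left_comm]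
      _ = (k + 1)! * ∑ c ∈ countVectorsOn N m with ∑ i, c i = k + 1, countWeight w c := by
          rw [sum_Icc_mul_sum_countVectorsOn w g hm, sum_congr rfl fun c _ => hg c, ← mul_sum,
            sum_filter, Nat.factorial_succ]
          push_cast
          ring

theorem sum_countVectorsOn_eq_sum_compositions (w F : ℕ → ℝ) {N M : ℕ} (hM : M ≤ N) :
    ∑ c ∈ countVectorsOn N M, F (∑ i, c i) * countWeight w c =
      ∑ j ∈ range (M + 1), F j / j ! * ∑ f ∈ compositions M j, ∏ i, w (f i) := by
  rw [← sum_fiberwise_of_maps_to fun c hc =>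
    mem_range.2 (Nat.lt_succ_of_le (sum_le_of_mem_countVectorsOn hc))]
  refine sum_congr rfl fun j _ => ?_
  rw [sum_prod_compositions_eq w j hM, sum_congr rfl fun c hc => by rw [(mem_filter.1 hc).2],
    ← mul_sum]
  field_simp

theorem gibbsSampling_eq_countWeight (α : ℝ) (V : ℕ → ℕ → ℝ) {n : ℕ} (c : Fin n → ℕ) :
    gibbsSampling α V n c =
      n ! * V n (∑ i, c i) * countWeight (fun s => risingFac (1 - α) (s - 1) / s !) c := by
  simp only [gibbsSampling, countWeight, Nat.add_sub_cancel, div_pow, div_div]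

/-- Expected number of blocks of size `l` under the Gibbs sampling formula. -/
theorem gibbsSampling_expected_size_l (α : ℝ) (V : ℕ → ℕ → ℝ)
    (n l : ℕ) (hl : 1 ≤ l) (hln : l ≤ n) :
    ∑ c ∈ countVectors n, ((c ⟨l - 1, by omega⟩ : ℕ) : ℝ) * gibbsSampling α V n c =
      (n.choose l : ℝ) * risingFac (1 - α) (l - 1) *
        ∑ k ∈ Finset.Icc 1 (n - l + 1), V n k * genStirling α (n - l) (k - 1) := by
  let w : ℕ → ℝ := fun s => risingFac (1 - α) (s - 1) / (s ! : ℝ)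
  have hsize : (⟨l - 1, by omega⟩ : Fin n).1 + 1 = l := Nat.sub_add_cancel hl
  have hfac : (n.choose l : ℝ) * l ! * (n - l)! = n ! := by
    exact_mod_cast Nat.choose_mul_factorial_mul_factorial hln
  calc ∑ c ∈ countVectors n, ((c ⟨l - 1, by omega⟩ : ℕ) : ℝ) * gibbsSampling α V n c
      = ∑ c ∈ countVectorsOn n n, ((c ⟨l - 1, by omega⟩ : ℕ) : ℝ) *
          ((fun k => n ! * V n k) (∑ i, c i) * countWeight w c) := by
        rw [countVectors_eq_countVectorsOn]
        exact sum_congr rfl fun c _ => by rw [gibbsSampling_eq_countWeight, mul_assoc]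
    _ = w l * ∑ j ∈ range (n - l + 1), n ! * V n (j + 1) / j ! *
          ∑ f ∈ compositions (n - l) j, ∏ i, w (f i) := by
        rw [sum_countVectorsOn_count_mul w (fun k => n ! * V n k) _ (by omega), hsize,
          sum_countVectorsOn_eq_sum_compositions w (fun k => n ! * V n (k + 1)) (Nat.sub_le n l)]
    _ = _ := by
        rw [← map_add_right_Icc 0 (n - l) 1, sum_map, ← range_succ_eq_Icc_zero, mul_sum, mul_sum]
        refine sum_congr rfl fun j _ => ?_
        simp only [addRightEmbedding_apply, add_tsub_cancel_right]
        simp only [genStirling, w, ← hfac]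
        field_simp
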